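/- The number of b in GF(q⁴) with Tr_{GF(q⁴)/GF(q)}(b) = 1 and Tr_{GF(q²)/GF(2)}(b^{q²+1}) = i equals q³/2, for each i ∈ {0,1}. -/

import Mathlib

/-!
Let `T = Tr_{GF(q⁴)/GF(q)}` and `f b = Tr_{GF(q²)/GF(2)} (b ^ (q² + 1))`, which lies in `GF(2)`.
The fibre `T⁻¹(1)` has `q³` elements. Choose `t ∈ GF(q)` with `Tr_{GF(q)/GF(2)} t = 1`. As `t` is
fixed by `b ↦ b ^ q²`, `(b + t) ^ (q² + 1) = b ^ (q² + 1) + t (b ^ q² + b) + t²`; by transitivity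
of traces the middle term contributes `Tr_{GF(q)/GF(2)} (t · T b)`, and `t²` contributes `0`.
So on `T⁻¹(1)` the involution `b ↦ b + t` flips `f`, and `f` takes each value on half of the fibre.
-/

open Finset Polynomial

/-- For `q` a power of the characteristic and `x ∈ GF(q ^ n)`, this is `Tr_{GF(q ^ n)/GF(q)} x`. -/
def frobTrace {R : Type*} [CommSemiring R] (q n : ℕ) (x : R) : R := ∑ j ∈ range n, x ^ q ^ j

section CommSemiring

variable {R : Type*} [CommSemiring R]

lemma frobTrace_zero_right (q : ℕ) (x : R) : frobTrace q 0 x = 0 := sum_range_zero _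

lemma frobTrace_succ (q n : ℕ) (x : R) : frobTrace q (n + 1) x = frobTrace q n x + x ^ q ^ n :=
  sum_range_succ _ _

lemma frobTrace_add_right (q m n : ℕ) (x : R) :
    frobTrace q (m + n) x = frobTrace q m x + frobTrace q n (x ^ q ^ m) := by
  simp only [frobTrace, sum_range_add, ← pow_mul, ← pow_add]

lemma frobTrace_pow_eq_of_pow_eq (q n : ℕ) {x : R} (hx : x ^ q ^ n = x) :
    frobTrace q n (x ^ q) = frobTrace q n x := by
  rcases n with _ | n
  · rfl
  rw [frobTrace, sum_range_succ, ← pow_mul, ← pow_succ', hx, frobTrace, sum_range_succ']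
  simp only [← pow_mul, ← pow_succ', pow_zero, pow_one]

lemma frobTrace_zero {q : ℕ} (hq : q ≠ 0) (n : ℕ) : frobTrace q n (0 : R) = 0 := by
  simp [frobTrace, hq]

lemma frobTrace_mul_left_of_pow_eq {q : ℕ} {t : R} (ht : t ^ q = t) (n : ℕ) (x : R) :
    frobTrace q n (t * x) = t * frobTrace q n x := by
  have htj (j : ℕ) : t ^ q ^ j = t := by
    induction j with
    | zero => exact pow_one t
    | succ j ih => rw [pow_succ, pow_mul, ih, ht]
  simp only [frobTrace, mul_sum, mul_pow, htj]

variable (p : ℕ) [ExpChar R p]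

lemma frobTrace_add {q k : ℕ} (hq : q = p ^ k) (n : ℕ) (x y : R) :
    frobTrace q n (x + y) = frobTrace q n x + frobTrace q n y := by
  simp only [frobTrace, hq, ← sum_add_distrib, ← pow_mul, add_pow_expChar_pow]

lemma frobTrace_pow_self {q k : ℕ} (hq : q = p ^ k) (n : ℕ) {x : R} (hx : x ^ q ^ n = x) :
    frobTrace q n x ^ q = frobTrace q n x := by
  calc frobTrace q n x ^ q = frobTrace q n (x ^ q) := by
        rw [hq, ← iterateFrobenius_def, frobTrace, map_sum]
        simp only [iterateFrobenius_def, frobTrace, pow_right_comm]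
    _ = frobTrace q n x := frobTrace_pow_eq_of_pow_eq _ _ hx

lemma frobTrace_mul (m n : ℕ) (x : R) :
    frobTrace p (m * n) x = frobTrace p m (frobTrace (p ^ m) n x) := by
  induction n with
  | zero => rw [mul_zero, frobTrace_zero_right, frobTrace_zero_right,
      frobTrace_zero (expChar_pos R p).ne']
  | succ n ih =>
    rw [mul_add_one, frobTrace_add_right, ih, frobTrace_succ, frobTrace_add p (pow_one p).symm,
      pow_mul]

end CommSemiring

lemma frobTrace_two_eq_zero_or_one {R : Type*} [CommRing R] [IsDomain R] [CharP R 2] {n : ℕ}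
    {x : R} (hx : x ^ 2 ^ n = x) : frobTrace 2 n x = 0 ∨ frobTrace 2 n x = 1 :=
  IsIdempotentElem.iff_eq_zero_or_one.mp <| by
    rw [IsIdempotentElem, ← sq, frobTrace_pow_self 2 (pow_one 2).symm n hx]

section Counting

variable {R : Type*} [CommRing R] [IsDomain R] [Fintype R] [DecidableEq R]

lemma card_filter_eval_eq_zero_le {P : R[X]} (hP : P ≠ 0) : #{x | P.eval x = 0} ≤ P.natDegree :=
  card_le_degree_of_subset_roots fun x hx => by simpa [hP] using (mem_filter.mp hx).2

lemma card_filter_frobTrace_eq_zero_le {q n : ℕ} (hq : 1 < q) (hn : 0 < n) :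
    #{x : R | frobTrace q n x = 0} ≤ q ^ (n - 1) := by
  set P : R[X] := ∑ j ∈ range n, X ^ q ^ j
  have hdeg : P.natDegree ≤ q ^ (n - 1) := natDegree_sum_le_of_forall_le _ _ fun j hj => by
    rw [natDegree_X_pow]
    exact Nat.pow_le_pow_right (by omega) (by rw [mem_range] at hj; omega)
  have hlead : P.coeff (q ^ (n - 1)) = 1 := by
    rw [finsetSum_coeff, sum_eq_single (n - 1) (fun j _ hj => ?_) (by simp [hn])]
    · simp
    · rw [coeff_X_pow, if_neg fun h => hj (Nat.pow_right_injective hq h.symm)]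
  have hP : P ≠ 0 := fun h => by simp [h] at hlead
  calc #{x : R | frobTrace q n x = 0} = #{x | P.eval x = 0} := by
        congr! 3 with x; simp [P, eval_finsetSum, frobTrace]
    _ ≤ q ^ (n - 1) := (card_filter_eval_eq_zero_le hP).trans hdeg

end Counting

lemma AddMonoidHom.card_image_mul_card_ker {G M : Type*} [AddGroup G] [Fintype G] [AddMonoid M]
    [DecidableEq M] (f : G →+ M) : #(univ.image f) * #{x | f x = 0} = Fintype.card G := by
  rw [← card_univ, card_eq_sum_card_image f univ, sum_const_nat fun c hc => ?_]
  obtain ⟨x, -, rfl⟩ := mem_image.mp hc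
  exact AddMonoidHom.card_fiber_eq_of_mem_range f ⟨x, rfl⟩ ⟨0, map_zero f⟩

section FiniteField

variable {F : Type*} [Field F] [Fintype F] [DecidableEq F]

lemma card_filter_pow_eq_self_le {q : ℕ} (hq : 1 < q) : #{x : F | x ^ q = x} ≤ q := by
  calc #{x : F | x ^ q = x} = #{x | (X ^ q - X : F[X]).eval x = 0} := by
        congr 1; exact filter_congr fun x _ => by simp [sub_eq_zero]
    _ ≤ q := (card_filter_eval_eq_zero_le (FiniteField.X_pow_card_sub_X_ne_zero F hq)).trans
        (FiniteField.X_pow_card_sub_X_natDegree_eq F hq).le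

/-- The image of the trace lies among the `≤ q` roots of `X ^ q - X` and its kernel among the
`≤ q ^ (n - 1)` roots of `∑ X ^ q ^ j`; since `|image| * |kernel| = q ^ n`, both bounds are attained. -/
theorem card_filter_frobTrace_eq (p : ℕ) [ExpChar F p] {k n : ℕ} (hn : 0 < n)
    (hF : Fintype.card F = (p ^ k) ^ n) {c : F} (hc : c ^ p ^ k = c) :
    #{x : F | frobTrace (p ^ k) n x = c} = (p ^ k) ^ (n - 1) := by
  set q := p ^ k
  have hq : 1 < q := (one_lt_pow_iff hn.ne').mp (hF ▸ Fintype.one_lt_card)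
  let T : F →+ F := AddMonoidHom.mk' (frobTrace q n) (frobTrace_add p rfl n)
  have hTK : univ.image T ⊆ ({x | x ^ q = x} : Finset F) := by
    simp only [subset_iff, mem_image, mem_filter, mem_univ, true_and]
    rintro _ ⟨x, rfl⟩
    exact frobTrace_pow_self p rfl n (hF ▸ FiniteField.pow_card x)
  have hK := card_filter_pow_eq_self_le (F := F) hq
  have hker : #{x | T x = 0} ≤ q ^ (n - 1) := card_filter_frobTrace_eq_zero_le hq hn
  have hprod := T.card_image_mul_card_ker
  rw [hF, ← Nat.sub_one_add_one hn.ne', pow_succ'] at hprod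
  have himage_card : #(univ.image T) = q := by
    by_contra h
    have := Nat.mul_lt_mul_of_lt_of_le (lt_of_le_of_ne ((card_le_card hTK).trans hK) h) hker
      (by positivity)
    omega
  have hker_card : #{x | T x = 0} = q ^ (n - 1) := by
    rw [himage_card] at hprod
    exact Nat.eq_of_mul_eq_mul_left (by omega) hprod
  have hcT : c ∈ Set.range T := by
    have himage := eq_of_subset_of_card_le hTK (himage_card ▸ hK)
    have hc' : c ∈ univ.image T := himage ▸ mem_filter.mpr ⟨mem_univ c, hc⟩
    simpa using hc'
  rw [← hker_card]
  exact AddMonoidHom.card_fiber_eq_of_mem_range T hcT ⟨0, map_zero T⟩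

lemma exists_pow_eq_self_frobTrace_eq_one [CharP F 2] {k n : ℕ}
    (hF : Fintype.card F = (2 ^ k) ^ n) : ∃ t : F, t ^ 2 ^ k = t ∧ frobTrace 2 k t = 1 := by
  rw [← pow_mul] at hF
  have hkn : 0 < k * n :=
    Nat.pos_of_ne_zero <| Nat.one_lt_two_pow_iff.mp <| hF ▸ Fintype.one_lt_card
  obtain ⟨x, hx⟩ : ∃ x : F, frobTrace 2 (k * n) x ≠ 0 := by
    by_contra! h
    have hker := card_filter_frobTrace_eq_zero_le (R := F) one_lt_two hkn
    rw [filter_true_of_mem fun x _ => h x, card_univ, hF] at hker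
    exact absurd hker (Nat.not_le.mpr (Nat.pow_lt_pow_right one_lt_two (by omega)))
  have hxF : x ^ (2 ^ k) ^ n = x := by rw [← pow_mul, ← hF, FiniteField.pow_card]
  refine ⟨frobTrace (2 ^ k) n x, frobTrace_pow_self 2 rfl n hxF, ?_⟩
  rw [← frobTrace_mul]
  refine (frobTrace_two_eq_zero_or_one ?_).resolve_left hx
  rw [← hF, FiniteField.pow_card]

end FiniteField

lemma frobTrace_pow_add_one_add {R : Type*} [CommRing R] [CharP R 2] (k : ℕ) (b : R) {t : R}
    (ht : t ^ 2 ^ k = t) :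
    frobTrace 2 (2 * k) ((b + t) ^ ((2 ^ k) ^ 2 + 1)) =
      frobTrace 2 (2 * k) (b ^ ((2 ^ k) ^ 2 + 1)) + frobTrace 2 k (t * frobTrace (2 ^ k) 4 b) := by
  have hadd := frobTrace_add (R := R) 2 (pow_one 2).symm
  have hexpand : (b + t) ^ ((2 ^ k) ^ 2 + 1) =
      b ^ ((2 ^ k) ^ 2 + 1) + t * (b ^ (2 ^ k) ^ 2 + b) + t * t := by
    have hQ : (2 ^ k) ^ 2 = 2 ^ (k * 2) := (pow_mul 2 k 2).symm
    rw [pow_succ, hQ, add_pow_char_pow, ← hQ, sq, pow_mul t, ht, ht]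
    ring
  have hcross : frobTrace 2 (2 * k) (t * (b ^ (2 ^ k) ^ 2 + b)) =
      frobTrace 2 k (t * frobTrace (2 ^ k) 4 b) := by
    rw [mul_comm 2 k, frobTrace_mul, frobTrace_mul_left_of_pow_eq ht,
      frobTrace_add 2 rfl, add_comm, ← frobTrace_add_right]
  have hsq : frobTrace 2 (2 * k) (t * t) = 0 := by
    rw [mul_comm 2 k, frobTrace_mul, frobTrace_mul_left_of_pow_eq ht]
    simp [frobTrace_succ, frobTrace_zero_right, ht, CharTwo.add_self_eq_zero,
      frobTrace_zero two_ne_zero]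
  rw [hexpand, hadd, hadd, hcross, hsq, add_zero]

lemma card_filter_eq_half_of_involutive {α R : Type*} [Ring R] [Nontrivial R] [CharP R 2]
    [DecidableEq R] {s : Finset α} {f : α → R} {g : α → α}
    (hf : ∀ a ∈ s, f a = 0 ∨ f a = 1) (hgs : ∀ a ∈ s, g a ∈ s) (hgg : ∀ a ∈ s, g (g a) = a)
    (hfg : ∀ a ∈ s, f (g a) = f a + 1) {i : R} (hi : i = 0 ∨ i = 1) : #{a ∈ s | f a = i} = #s / 2 := by
  have hswap : #{a ∈ s | f a = 0} = #{a ∈ s | f a = 1} := by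
    refine card_nbij' g g (fun a ha => ?_) (fun a ha => ?_) (fun a ha => hgg a (mem_filter.mp ha).1)
      (fun a ha => hgg a (mem_filter.mp ha).1) <;>
    · obtain ⟨has, hfa⟩ := mem_filter.mp ha
      refine mem_filter.mpr ⟨hgs a has, ?_⟩
      rw [hfg a has, hfa]
      simp [CharTwo.add_self_eq_zero]
  have hsplit : #{a ∈ s | f a = 0} + #{a ∈ s | f a = 1} = #s := by
    rw [← card_filter_add_card_filter_not (fun a => f a = 0) (s := s)]
    congr 2
    exact filter_congr fun a ha => by rcases hf a ha with h | h <;> simp [h]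
  rcases hi with rfl | rfl <;> omega

theorem stmt15_general (k : ℕ) (q : ℕ) (hq : q = 2^k) {F : Type*} [Field F] [Fintype F] [DecidableEq F] (hF : Fintype.card F = q^4) (i : F) (hi : i = 0 ∨ i = 1) :
    (Finset.univ.filter (fun b : F => (b + b^q + b^(q^2) + b^(q^3)) = 1 ∧ (∑ i ∈ Finset.range (2*k), (b^(q^2+1))^(2^i)) = i)).card = q^3 / 2 := by
  subst hq
  have : CharP F 2 := charP_of_card_eq_prime_pow (f := k * 4) (by rw [hF, pow_mul])
  obtain ⟨t, ht, htr⟩ := exists_pow_eq_self_frobTrace_eq_one hF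
  have htrace_t : frobTrace (2 ^ k) 4 t = 0 := by
    rw [← mul_one t, frobTrace_mul_left_of_pow_eq ht]
    simp [frobTrace, show (4 : F) = 2 * 2 by norm_num, CharTwo.two_eq_zero]
  have hnorm (b : F) : (b ^ ((2 ^ k) ^ 2 + 1)) ^ 2 ^ (2 * k) = b ^ ((2 ^ k) ^ 2 + 1) := by
    rw [← pow_mul, show ((2 ^ k) ^ 2 + 1) * 2 ^ (2 * k) = (2 ^ k) ^ 4 + (2 ^ k) ^ 2 by ring,
      pow_add, ← hF, FiniteField.pow_card, ← pow_succ']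
  calc _ = #{b ∈ {b : F | frobTrace (2 ^ k) 4 b = 1} |
          frobTrace 2 (2 * k) (b ^ ((2 ^ k) ^ 2 + 1)) = i} := by
        rw [filter_filter]
        simp only [frobTrace_succ, frobTrace_zero_right, pow_zero, pow_one, zero_add]
        rfl
    _ = #{b : F | frobTrace (2 ^ k) 4 b = 1} / 2 := by
      refine card_filter_eq_half_of_involutive (g := (· + t))
        (fun b _ => frobTrace_two_eq_zero_or_one (hnorm b)) (fun b hb => ?_)
        (fun b _ => by simp [add_assoc, CharTwo.add_self_eq_zero]) (fun b hb => ?_) hi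
      · simp only [mem_filter, mem_univ, true_and] at hb ⊢
        rw [frobTrace_add 2 rfl, hb, htrace_t, add_zero]
      · rw [frobTrace_pow_add_one_add k b ht, (mem_filter.mp hb).2, mul_one, htr]
    _ = (2 ^ k) ^ 3 / 2 := by rw [card_filter_frobTrace_eq 2 (by norm_num) hF (one_pow _)]

theorem stmt15 (k : ℕ) (hk : 0 < k) (q : ℕ) (hq : q = 2^k) {F : Type*} [Field F] [Fintype F] [DecidableEq F] (hF : Fintype.card F = q^4) (i : F) (hi : i = 0 ∨ i = 1) :
    (Finset.univ.filter (fun b : F => (b + b^q + b^(q^2) + b^(q^3)) = 1 ∧ (∑ i ∈ Finset.range (2*k), (b^(q^2+1))^(2^i)) = i)).card = q^3 / 2 :=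
  stmt15_general k q hq hF i hi
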